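/- arXiv:1409.3665 — 2 statements merged into one kernel-verified Lean document; each statement's English description precedes it below -/
import Mathlib

section
/- Let q be a no-signaling box with binary inputs and outputs, parametrized as q(a,b|x,y) = (1/4)(1 + (−1)^a α_x + (−1)^b β_y + (−1)^{a+b} ζ_{xy}) with the non-negativity constraints 1 − |α_x − β_y| ≥ ζ_{xy} ≥ |α_x + β_y| − 1 for all x,y. If its CHSH value (1/4)·Σ_{x,y} (1 + (−1)^{xy} ζ_{xy})/2 is at least (1+η)/2 for some η ∈ [1/√2, 1], then max_{x,y} |ζ_{xy} − α_x β_y| / √((1−α_x²)(1−β_y²)) ≥ η (with the convention 0/0 = 0). -/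
open Finset

noncomputable def expec {α : Type*} [Fintype α] (p f : α → ℝ) : ℝ := ∑ a, p a * f a

noncomputable def pVar {α : Type*} [Fintype α] (p f : α → ℝ) : ℝ :=
  expec p (fun a => f a ^ 2) - (expec p f) ^ 2

/-- `p` is a probability distribution on `α × β`. -/
def IsDist {α β : Type*} [Fintype α] [Fintype β] (p : α → β → ℝ) : Prop :=
  (∀ a b, 0 ≤ p a b) ∧ (∑ a, ∑ b, p a b) = 1

noncomputable def margA {α β : Type*} [Fintype α] [Fintype β] (p : α → β → ℝ) : α → ℝ :=
  fun a => ∑ b, p a b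

noncomputable def margB {α β : Type*} [Fintype α] [Fintype β] (p : α → β → ℝ) : β → ℝ :=
  fun b => ∑ a, p a b

/-- conditional expectation `E_{B|A=a}[f]` (with the convention `x / 0 = 0`). -/
noncomputable def condExpB {α β : Type*} [Fintype α] [Fintype β] (p f : α → β → ℝ) : α → ℝ :=
  fun a => (∑ b, p a b * f a b) / margA p a

/-- conditional expectation `E_{A|B=b}[f]` (with the convention `x / 0 = 0`). -/
noncomputable def condExpA {α β : Type*} [Fintype α] [Fintype β] (p f : α → β → ℝ) : β → ℝ :=
  fun b => (∑ a, p a b * f a b) / margB p b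

noncomputable def jointVar {α β : Type*} [Fintype α] [Fintype β] (p f : α → β → ℝ) : ℝ :=
  pVar (fun x : α × β => p x.1 x.2) (fun x => f x.1 x.2)

/-- `(l1, l2)` belongs to the maximal correlation ribbon of `p`:
`Var[f] ≥ l1 * Var_A E_{B|A}[f] + l2 * Var_B E_{A|B}[f]` for every `f`. -/
def memMC {α β : Type*} [Fintype α] [Fintype β] (p : α → β → ℝ) (l1 l2 : ℝ) : Prop :=
  0 ≤ l1 ∧ 0 ≤ l2 ∧ ∀ f : α → β → ℝ,
    l1 * pVar (margA p) (condExpB p f) + l2 * pVar (margB p) (condExpA p f) ≤ jointVar p f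

/-- Maximal correlation of the joint distribution `p`: the supremum of `E[f_A g_B]`
over mean-zero, unit-second-moment functions of `A` and of `B` (0 if no such pair exists,
since `Real.sSup ∅ = 0`). -/
noncomputable def maxCorr {α β : Type*} [Fintype α] [Fintype β] (p : α → β → ℝ) : ℝ :=
  sSup {r | ∃ f : α → ℝ, ∃ g : β → ℝ,
    expec (margA p) f = 0 ∧ expec (margB p) g = 0 ∧
    expec (margA p) (fun a => f a ^ 2) = 1 ∧
    expec (margB p) (fun b => g b ^ 2) = 1 ∧
    r = ∑ a, ∑ b, p a b * f a * g b}

set_option maxHeartbeats 1000000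

lemma deg_aux (a b z : ℝ) (ha : a^2 = 1) (hb : b^2 ≤ 1)
    (h1 : z ≤ 1 - |a - b|) (h2 : |a + b| - 1 ≤ z) : z = a * b := by
  have hb1 : -1 ≤ b := by nlinarith
  have hb2 : b ≤ 1 := by nlinarith
  have hf : (a - 1) * (a + 1) = 0 := by nlinarith
  rcases mul_eq_zero.mp hf with h | h
  · have ha' : a = 1 := by linarith
    subst ha'
    rw [abs_of_nonneg (by linarith : (0:ℝ) ≤ 1 - b)] at h1
    rw [abs_of_nonneg (by linarith : (0:ℝ) ≤ 1 + b)] at h2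
    linarith
  · have ha' : a = -1 := by linarith
    subst ha'
    rw [abs_of_nonpos (by linarith : (-1:ℝ) - b ≤ 0)] at h1
    rw [abs_of_nonpos (by linarith : (-1:ℝ) + b ≤ 0)] at h2
    linarith

lemma alg2 (a0 a1 b0 b1 u0 u1 v0 v1 η : ℝ)
    (hu0 : u0^2 = 1 - a0^2) (hu1 : u1^2 = 1 - a1^2)
    (hv0 : v0^2 = 1 - b0^2) (hv1 : v1^2 = 1 - b1^2)
    (hu0' : 0 ≤ u0) (hu1' : 0 ≤ u1) (hv0' : 0 ≤ v0) (hv1' : 0 ≤ v1)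
    (hη : 1 ≤ 2*η^2) (hηp : 0 < η) :
    a0*b0 + a0*b1 + a1*b0 - a1*b1 + η*(u0*v0 + u0*v1 + u1*v0 + u1*v1) ≤ 4*η := by
  have hu : (u0+u1)^2 ≤ 4 - 2*(a0^2+a1^2) := by nlinarith [sq_nonneg (u0-u1)]
  have hA : a0^2 + a1^2 + (η*(u0+u1))^2 ≤ 4*η^2 := by
    nlinarith [mul_le_mul_of_nonneg_left hu (sq_nonneg η),
      mul_nonneg (by linarith : (0:ℝ) ≤ 2*η^2 - 1) (by positivity : (0:ℝ) ≤ a0^2 + a1^2)]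
  have hB : (b0+b1)^2 + (b0-b1)^2 + (v0+v1)^2 ≤ 4 := by nlinarith [sq_nonneg (v0-v1)]
  have hCS : (a0*(b0+b1) + a1*(b0-b1) + (η*(u0+u1))*(v0+v1))^2
      ≤ (a0^2 + a1^2 + (η*(u0+u1))^2) * ((b0+b1)^2 + (b0-b1)^2 + (v0+v1)^2) := by
    nlinarith [sq_nonneg (a0*(b0-b1) - a1*(b0+b1)),
      sq_nonneg (a0*(v0+v1) - (η*(u0+u1))*(b0+b1)),
      sq_nonneg (a1*(v0+v1) - (η*(u0+u1))*(b0-b1))]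
  have hBnn : (0:ℝ) ≤ (b0+b1)^2 + (b0-b1)^2 + (v0+v1)^2 := by positivity
  have hAnn : (0:ℝ) ≤ 4*η^2 := by positivity
  have hAnn2 : (0:ℝ) ≤ a0^2 + a1^2 + (η*(u0+u1))^2 := by positivity
  have hprod : (a0^2 + a1^2 + (η*(u0+u1))^2) * ((b0+b1)^2 + (b0-b1)^2 + (v0+v1)^2)
      ≤ (4*η^2) * 4 := mul_le_mul hA hB hBnn hAnn
  have hY : (a0*(b0+b1) + a1*(b0-b1) + (η*(u0+u1))*(v0+v1))^2 ≤ (4*η)^2 := by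
    calc (a0*(b0+b1) + a1*(b0-b1) + (η*(u0+u1))*(v0+v1))^2
        ≤ (a0^2 + a1^2 + (η*(u0+u1))^2) * ((b0+b1)^2 + (b0-b1)^2 + (v0+v1)^2) := hCS
      _ ≤ (4*η^2) * 4 := hprod
      _ = (4*η)^2 := by ring
  nlinarith [hY]

lemma mainalg (a0 a1 b0 b1 η : ℝ) (ha0 : a0^2 ≤ 1) (ha1 : a1^2 ≤ 1)
    (hb0 : b0^2 ≤ 1) (hb1 : b1^2 ≤ 1) (hη : 1 ≤ 2*η^2) (hηp : 0 < η) :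
    a0*b0 + a0*b1 + a1*b0 - a1*b1
      + η * (Real.sqrt ((1-a0^2)*(1-b0^2)) + Real.sqrt ((1-a0^2)*(1-b1^2))
           + Real.sqrt ((1-a1^2)*(1-b0^2)) + Real.sqrt ((1-a1^2)*(1-b1^2))) ≤ 4*η := by
  have h0 : (0:ℝ) ≤ 1 - a0^2 := by linarith
  have h1 : (0:ℝ) ≤ 1 - a1^2 := by linarith
  have g0 : (0:ℝ) ≤ 1 - b0^2 := by linarith
  have g1 : (0:ℝ) ≤ 1 - b1^2 := by linarith
  simp only [Real.sqrt_mul h0, Real.sqrt_mul h1]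
  have := alg2 a0 a1 b0 b1 (Real.sqrt (1-a0^2)) (Real.sqrt (1-a1^2))
    (Real.sqrt (1-b0^2)) (Real.sqrt (1-b1^2)) η
    (Real.sq_sqrt h0) (Real.sq_sqrt h1) (Real.sq_sqrt g0) (Real.sq_sqrt g1)
    (Real.sqrt_nonneg _) (Real.sqrt_nonneg _) (Real.sqrt_nonneg _) (Real.sqrt_nonneg _) hη hηp
  linarith

/-- any binary no-signaling box, parametrized by biases `al x`, `be y` and
correlators `ze x y`, whose CHSH value is at least `(1+η)/2` for some `η ∈ [1/√2, 1]`,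
has maximal correlation at least `η` for some input pair (with the convention `x/0 = 0`). -/

theorem chsh_lower_bounds_maxCorr (al be : Bool → ℝ) (ze : Bool → Bool → ℝ) (η : ℝ)
    (hcon : ∀ x y, ze x y ≤ 1 - |al x - be y| ∧ |al x + be y| - 1 ≤ ze x y)
    (hη1 : 1 / Real.sqrt 2 ≤ η) (hη2 : η ≤ 1)
    (hCHSH : (1 + η) / 2
      ≤ (1 / 4) * ∑ x, ∑ y, (1 + (if x && y then (-1 : ℝ) else 1) * ze x y) / 2) :
    ∃ x y, η ≤ |ze x y - al x * be y|
        / Real.sqrt ((1 - (al x) ^ 2) * (1 - (be y) ^ 2)) := by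
  by_contra hc
  push_neg at hc
  have hηpos : 0 < η := lt_of_lt_of_le (by positivity) hη1
  have hη2' : 1 ≤ 2 * η ^ 2 := by
    have h : (1 / Real.sqrt 2) ^ 2 ≤ η ^ 2 := pow_le_pow_left₀ (by positivity) hη1 2
    rw [div_pow, one_pow, Real.sq_sqrt (by norm_num : (0:ℝ) ≤ 2)] at h
    linarith
  have hbd : ∀ x y, (al x) ^ 2 ≤ 1 ∧ (be y) ^ 2 ≤ 1 := by
    intro x y
    obtain ⟨h1, h2⟩ := hcon x y
    constructor <;>
      (rcases abs_cases (al x + be y) with ⟨e1, e2⟩ | ⟨e1, e2⟩ <;>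
        rcases abs_cases (al x - be y) with ⟨f1, f2⟩ | ⟨f1, f2⟩ <;> nlinarith)
  have key : ∀ x y, |ze x y - al x * be y|
      ≤ η * Real.sqrt ((1 - (al x) ^ 2) * (1 - (be y) ^ 2)) := by
    intro x y
    obtain ⟨hax, hby⟩ := hbd x y
    obtain ⟨h1, h2⟩ := hcon x y
    by_cases hD : Real.sqrt ((1 - (al x) ^ 2) * (1 - (be y) ^ 2)) = 0
    · rw [hD, mul_zero]
      have hDle : (1 - (al x) ^ 2) * (1 - (be y) ^ 2) ≤ 0 := by
        by_contra hpos
        push_neg at hpos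
        exact (ne_of_gt (Real.sqrt_pos.mpr hpos)) hD
      have hcase : (al x) ^ 2 = 1 ∨ (be y) ^ 2 = 1 := by
        rcases lt_or_ge ((al x) ^ 2) 1 with h | h
        · right; nlinarith
        · left; linarith
      rcases hcase with h | h
      · rw [deg_aux (al x) (be y) (ze x y) h hby h1 h2]; simp
      · have h1' : ze x y ≤ 1 - |be y - al x| := by rwa [abs_sub_comm]
        have h2' : |be y + al x| - 1 ≤ ze x y := by rwa [add_comm]
        rw [show al x * be y = be y * al x by ring,
          deg_aux (be y) (al x) (ze x y) h hax h1' h2']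
        simp
    · have hDpos : 0 < Real.sqrt ((1 - (al x) ^ 2) * (1 - (be y) ^ 2)) :=
        (Real.sqrt_nonneg _).lt_of_ne (Ne.symm hD)
      exact ((div_lt_iff₀ hDpos).mp (hc x y)).le
  simp only [Fintype.sum_bool] at hCHSH
  norm_num at hCHSH
  have hsum : 4 * η ≤ ze false false + ze false true + ze true false - ze true true := by
    linarith
  have halg := mainalg (al false) (al true) (be false) (be true) η
    (hbd false false).1 (hbd true true).1 (hbd false false).2 (hbd true true).2 hη2' hηpos
  by_cases hall : ∀ x y, Real.sqrt ((1 - (al x) ^ 2) * (1 - (be y) ^ 2)) = 0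
  · have hz : ∀ x y, ze x y = al x * be y := by
      intro x y
      have h := key x y
      rw [hall x y, mul_zero] at h
      have := abs_nonpos_iff.mp h
      linarith [sub_eq_zero.mp this]
    have hab : ∀ x y, -1 ≤ al x ∧ al x ≤ 1 ∧ -1 ≤ be y ∧ be y ≤ 1 := by
      intro x y
      obtain ⟨h1, h2⟩ := hbd x y
      refine ⟨by nlinarith, by nlinarith, by nlinarith, by nlinarith⟩
    obtain ⟨p1, p2, q1, q2⟩ := hab false false
    obtain ⟨r1, r2, s1, s2⟩ := hab true true
    rw [hz false false, hz false true, hz true false, hz true true] at hsum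
    have t1 : (al false + al true) * be false ≤ |al false + al true| := by
      calc (al false + al true) * be false ≤ |(al false + al true) * be false| := le_abs_self _
        _ = |al false + al true| * |be false| := abs_mul _ _
        _ ≤ |al false + al true| * 1 :=
            mul_le_mul_of_nonneg_left (abs_le.mpr ⟨q1, q2⟩) (abs_nonneg _)
        _ = |al false + al true| := mul_one _
    have t2 : (al false - al true) * be true ≤ |al false - al true| := by
      calc (al false - al true) * be true ≤ |(al false - al true) * be true| := le_abs_self _
        _ = |al false - al true| * |be true| := abs_mul _ _
        _ ≤ |al false - al true| * 1 :=
            mul_le_mul_of_nonneg_left (abs_le.mpr ⟨s1, s2⟩) (abs_nonneg _)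
        _ = |al false - al true| := mul_one _
    have t3 : |al false + al true| + |al false - al true| ≤ 2 := by
      rcases abs_cases (al false + al true) with ⟨e1, e2⟩ | ⟨e1, e2⟩ <;>
        rcases abs_cases (al false - al true) with ⟨f1, f2⟩ | ⟨f1, f2⟩ <;> linarith
    have hC : al false * be false + al false * be true + al true * be false
        - al true * be true ≤ 2 := by nlinarith [t1, t2, t3]
    nlinarith [hsum, hC, hη2', hηpos]
  · push_neg at hall
    obtain ⟨x0, y0, hne⟩ := hall
    have hDpos : 0 < Real.sqrt ((1 - (al x0) ^ 2) * (1 - (be y0) ^ 2)) :=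
      (Real.sqrt_nonneg _).lt_of_ne (Ne.symm hne)
    have hstrict := (div_lt_iff₀ hDpos).mp (hc x0 y0)
    have k00 := key false false
    have k01 := key false true
    have k10 := key true false
    have k11 := key true true
    cases x0 <;> cases y0 <;>
      linarith [le_abs_self (ze false false - al false * be false),
        neg_le_abs (ze false false - al false * be false),
        le_abs_self (ze false true - al false * be true),
        neg_le_abs (ze false true - al false * be true),
        le_abs_self (ze true false - al true * be false),
        neg_le_abs (ze true false - al true * be false),
        le_abs_self (ze true true - al true * be true),
        neg_le_abs (ze true true - al true * be true)]
end

section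
/- For real vectors ṽ = (v₀, v₁) and w̃ = (w₀, w₁) where each v_x = (α_x, √(1−α_x²)) and w_y = (β_y, √(1−β_y²)) are unit vectors in ℝ², and matrix M̃ built from 2×2 blocks M_{xy} = diag((−1)^{xy}, η), the operator norm of M̃ equals max{√2, 2η}; consequently ṽᵗ M̃ w̃ ≤ 2·max{√2, 2η}. -/
/-!
On the first coordinates of the blocks `M̃` acts as `[[1, 1], [1, -1]]`, which is `√2` times an
orthogonal matrix, and on the second coordinates as `η • [[1, 1], [1, 1]]`, which has norm `2η`.
The two parts act on orthogonal subspaces, so `‖M̃‖ = max {√2, 2η}`. The bound on `ṽᵗ M̃ w̃` is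
then Cauchy–Schwarz together with `‖ṽ‖ = ‖w̃‖ = √2`.
-/

open Finset

namespace ContinuousLinearMap

variable {E F : Type*} [SeminormedAddCommGroup E] [SeminormedAddCommGroup F]
  [NormedSpace ℝ E] [NormedSpace ℝ F]

theorem opNorm_le_of_norm_sq_le (T : E →L[ℝ] F) {c : ℝ} (hc : 0 ≤ c)
    (h : ∀ u, ‖T u‖ ^ 2 ≤ c ^ 2 * ‖u‖ ^ 2) : ‖T‖ ≤ c :=
  T.opNorm_le_bound hc fun u =>
    (pow_le_pow_iff_left₀ (norm_nonneg _) (by positivity) two_ne_zero).1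
      (by rw [mul_pow]; exact h u)

theorem le_opNorm_of_sq_mul_norm_sq_le (T : E →L[ℝ] F) {c : ℝ} {u : E} (hu : ‖u‖ ≠ 0)
    (h : c ^ 2 * ‖u‖ ^ 2 ≤ ‖T u‖ ^ 2) : c ≤ ‖T‖ := by
  have hcu : c * ‖u‖ ≤ ‖T u‖ := abs_le_of_sq_le_sq' (by rwa [mul_pow]) (norm_nonneg _) |>.2
  exact le_of_mul_le_mul_right (hcu.trans (T.le_opNorm u)) ((norm_nonneg u).lt_of_ne' hu)

end ContinuousLinearMap

theorem Matrix.sum_mul_mul_le_opNorm_mul_norm_mul_norm {m n : Type*} [Fintype m] [Fintype n]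
    [DecidableEq n] (M : Matrix m n ℝ) (v : EuclideanSpace ℝ m) (w : EuclideanSpace ℝ n) :
    ∑ i, ∑ j, v i * M i j * w j ≤
      ‖LinearMap.toContinuousLinearMap (Matrix.toEuclideanLin M)‖ * ‖v‖ * ‖w‖ := by
  set T := LinearMap.toContinuousLinearMap (Matrix.toEuclideanLin M)
  have hTw : ∀ i, T w i = ∑ j, M i j * w j := fun i => rfl
  calc ∑ i, ∑ j, v i * M i j * w j = inner ℝ v (T w) := by
        simp only [PiLp.inner_apply, RCLike.inner_apply, conj_trivial, hTw, sum_mul]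
        exact sum_congr rfl fun i _ => sum_congr rfl fun j _ => by ring
    _ ≤ ‖v‖ * ‖T w‖ := real_inner_le_norm v (T w)
    _ ≤ ‖v‖ * (‖T‖ * ‖w‖) := mul_le_mul_of_nonneg_left (T.le_opNorm w) (norm_nonneg v)
    _ = ‖T‖ * ‖v‖ * ‖w‖ := by ring

theorem EuclideanSpace.norm_sq_eq_bool_prod (u : EuclideanSpace ℝ (Bool × Bool)) :
    ‖u‖ ^ 2 = u (false, false) ^ 2 + u (false, true) ^ 2 + u (true, false) ^ 2
      + u (true, true) ^ 2 := by
  simp only [EuclideanSpace.real_norm_sq_eq, Fintype.sum_prod_type, Fintype.sum_bool]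
  ring

/-- Entry `(x, i)` is coordinate `i` of block `x`, with `i = false` the first coordinate. -/
def chshMatrix (η : ℝ) : Matrix (Bool × Bool) (Bool × Bool) ℝ := fun r c =>
  if r.2 = c.2 then (if r.2 = false then (if r.1 && c.1 then (-1 : ℝ) else 1) else η) else 0

noncomputable def blockUnitVector (a : Bool → ℝ) : EuclideanSpace ℝ (Bool × Bool) :=
  WithLp.toLp 2 fun r => if r.2 = false then a r.1 else √(1 - a r.1 ^ 2)

theorem norm_blockUnitVector {a : Bool → ℝ} (ha : ∀ x, |a x| ≤ 1) :
    ‖blockUnitVector a‖ = √2 := by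
  have hsq : ∀ x, √(1 - a x ^ 2) ^ 2 = 1 - a x ^ 2 := fun x =>
    Real.sq_sqrt (by nlinarith [abs_le.mp (ha x)])
  rw [← Real.sqrt_sq (norm_nonneg _), EuclideanSpace.norm_sq_eq_bool_prod]
  simp [blockUnitVector, hsq]
  ring_nf

theorem norm_sq_toEuclideanLin_chshMatrix (η : ℝ) (u : EuclideanSpace ℝ (Bool × Bool)) :
    ‖LinearMap.toContinuousLinearMap (Matrix.toEuclideanLin (chshMatrix η)) u‖ ^ 2 =
      (u (false, false) + u (true, false)) ^ 2 + (u (false, false) - u (true, false)) ^ 2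
        + 2 * (η * (u (false, true) + u (true, true))) ^ 2 := by
  rw [EuclideanSpace.norm_sq_eq_bool_prod]
  simp [chshMatrix, Matrix.mulVec, dotProduct, Fintype.sum_prod_type]
  ring

theorem opNorm_toEuclideanLin_chshMatrix {η : ℝ} (hη : 0 ≤ η) :
    ‖LinearMap.toContinuousLinearMap (Matrix.toEuclideanLin (chshMatrix η))‖
      = max √2 (2 * η) := by
  set T := LinearMap.toContinuousLinearMap (Matrix.toEuclideanLin (chshMatrix η))
  set N := max √2 (2 * η)
  have h2 : 2 ≤ N ^ 2 := by
    have := pow_le_pow_left₀ (Real.sqrt_nonneg 2) (le_max_left √2 (2 * η)) 2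
    rwa [Real.sq_sqrt zero_le_two] at this
  have hη2 : (2 * η) ^ 2 ≤ N ^ 2 := pow_le_pow_left₀ (by positivity) (le_max_right _ _) 2
  refine le_antisymm (T.opNorm_le_of_norm_sq_le (by positivity) fun u => ?_) (max_le ?_ ?_)
  · rw [norm_sq_toEuclideanLin_chshMatrix, EuclideanSpace.norm_sq_eq_bool_prod]
    set a := u (false, false); set b := u (true, false)
    set c := u (false, true); set d := u (true, true)
    linarith [mul_nonneg (sq_nonneg η) (sq_nonneg (c - d)),
      mul_le_mul_of_nonneg_right h2 (add_nonneg (sq_nonneg a) (sq_nonneg b)),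
      mul_le_mul_of_nonneg_right hη2 (add_nonneg (sq_nonneg c) (sq_nonneg d))]
  · set u := EuclideanSpace.single ((false, false) : Bool × Bool) (1 : ℝ)
    have hu : ‖u‖ ^ 2 = 1 := by simp [u]
    refine T.le_opNorm_of_sq_mul_norm_sq_le (u := u) (by simp [u]) ?_
    rw [norm_sq_toEuclideanLin_chshMatrix, hu, Real.sq_sqrt zero_le_two]
    norm_num [u]
  · set u : EuclideanSpace ℝ (Bool × Bool) := WithLp.toLp 2 fun r => if r.2 then 1 else 0
    have hu : ‖u‖ ^ 2 = 2 := by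
      rw [EuclideanSpace.norm_sq_eq_bool_prod]
      norm_num [u]
    refine T.le_opNorm_of_sq_mul_norm_sq_le (u := u)
      (by rw [← pow_ne_zero_iff two_ne_zero, hu]; norm_num) ?_
    rw [norm_sq_toEuclideanLin_chshMatrix, hu]
    exact le_of_eq (by simp [u]; ring)

/-- for the 4×4 block matrix `M̃` with blocks `M_{xy} = diag((−1)^{xy}, η)`
and the unit-block vectors `ṽ`, `w̃` built from `(α_x, √(1−α_x²))` and `(β_y, √(1−β_y²))`,
the operator norm of `M̃` equals `max {√2, 2η}`, and hence `ṽᵗ M̃ w̃ ≤ 2·max {√2, 2η}`.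
Indices: a pair `(x, i) : Bool × Bool` denotes block `x` and coordinate `i`
(`i = false` is the first coordinate of the block). -/
theorem block_matrix_opNorm (al be : Bool → ℝ) (η : ℝ) (hη : 0 ≤ η)
    (hal : ∀ x, |al x| ≤ 1) (hbe : ∀ y, |be y| ≤ 1) :
    let M : Matrix (Bool × Bool) (Bool × Bool) ℝ := fun r c =>
      if r.2 = c.2 then
        (if r.2 = false then (if r.1 && c.1 then (-1 : ℝ) else 1) else η)
      else 0
    let v : EuclideanSpace ℝ (Bool × Bool) := WithLp.toLp 2 (fun r =>
      if r.2 = false then al r.1 else Real.sqrt (1 - (al r.1) ^ 2))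
    let w : EuclideanSpace ℝ (Bool × Bool) := WithLp.toLp 2 (fun r =>
      if r.2 = false then be r.1 else Real.sqrt (1 - (be r.1) ^ 2))
    ‖LinearMap.toContinuousLinearMap (Matrix.toEuclideanLin M)‖
        = max (Real.sqrt 2) (2 * η) ∧
      (∑ i, ∑ j, v i * M i j * w j) ≤ 2 * max (Real.sqrt 2) (2 * η) := by
  show ‖LinearMap.toContinuousLinearMap (Matrix.toEuclideanLin (chshMatrix η))‖
        = max √2 (2 * η) ∧
      ∑ i, ∑ j, blockUnitVector al i * chshMatrix η i j * blockUnitVector be j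
        ≤ 2 * max √2 (2 * η)
  have hnorm := opNorm_toEuclideanLin_chshMatrix hη
  refine ⟨hnorm, ?_⟩
  calc _ ≤ _ := Matrix.sum_mul_mul_le_opNorm_mul_norm_mul_norm _ _ _
    _ = 2 * max √2 (2 * η) := by
      rw [hnorm, norm_blockUnitVector hal, norm_blockUnitVector hbe, mul_assoc,
        Real.mul_self_sqrt zero_le_two, mul_comm]
end
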